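/- For all positive integers n and m, the maps σ_n and ρ̃_m on ℤ[ℚ/ℤ] satisfy σ_n(ρ̃_m(x)) = gcd(n,m)·ρ̃_{m'}(σ_{n'}(x)) for all x ∈ ℤ[ℚ/ℤ], where n' = n/gcd(n,m) and m' = m/gcd(n,m). -/

import Mathlib

noncomputable section

/-- The group `ℚ/ℤ`. -/
abbrev QZ : Type := AddCircle (1 : ℚ)

/-- The integral group ring `ℤ[ℚ/ℤ]`. -/
abbrev GR : Type := AddMonoidAlgebra ℤ QZ

/-- The standard basis element `e(r)` of `ℤ[ℚ/ℤ]`. -/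
def eQZ (r : QZ) : GR := AddMonoidAlgebra.single r 1

/-- `σ_n : ℤ[ℚ/ℤ] → ℤ[ℚ/ℤ]`, the ℤ-linear extension of `e(r) ↦ e(n • r)`. -/
def sigmaZ (n : ℕ) : GR → GR := AddMonoidAlgebra.mapDomain (fun r : QZ => n • r)

/-- A chosen solution of `n • r' = r` in `ℚ/ℤ`. -/
def rdiv (n : ℕ) (r : QZ) : QZ := ((Quotient.out r / (n : ℚ) : ℚ) : QZ)

/-- `Σ_{ns=0} e(s)`, the sum of basis elements over the `n`-torsion subgroup of `ℚ/ℤ`,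
whose elements are the classes of `k/n` for `k = 0, …, n-1`. -/
def torsum (n : ℕ) : GR := ∑ k ∈ Finset.range n, eQZ (((k : ℚ) / (n : ℚ) : ℚ) : QZ)

/-- `ρ̃_n : ℤ[ℚ/ℤ] → ℤ[ℚ/ℤ]`, the additive (ℤ-linear) map sending `e(r)` to the sum of
`e(r')` over the `n` solutions of `n • r' = r`, which are `rdiv n r + k/n`, `k = 0,…,n-1`. -/
def rhoZ (n : ℕ) : GR →ₗ[ℤ] GR :=
  (Finsupp.lift GR ℤ QZ
    (fun r => ∑ k ∈ Finset.range n, eQZ (rdiv n r + (((k : ℚ) / (n : ℚ) : ℚ) : QZ)))).comp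
    (AddMonoidAlgebra.coeffLinearEquiv ℤ).toLinearMap

open Finset

variable {M : Type*} [AddCommMonoid M]

lemma sum_range_cast (m' : ℕ) [NeZero m'] (H : ZMod m' → M) :
    ∑ k ∈ range m', H ((k : ℕ) : ZMod m') = ∑ c : ZMod m', H c := by
  refine Finset.sum_nbij' (fun k => ((k : ℕ) : ZMod m')) (fun c => c.val) ?_ ?_ ?_ ?_ ?_
  · intro a _; exact mem_univ _
  · intro c _; exact mem_range.2 (ZMod.val_lt c)
  · intro a ha; exact ZMod.val_cast_of_lt (mem_range.1 ha)
  · intro c _; exact ZMod.natCast_rightInverse c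
  · intro a _; rfl

lemma sum_range_mul_cast (m' : ℕ) [NeZero m'] (g : ℕ) (H : ZMod m' → M) :
    ∑ k ∈ range (g * m'), H ((k : ℕ) : ZMod m') = g • ∑ c : ZMod m', H c := by
  induction g with
  | zero => simp
  | succ g ih =>
      rw [add_mul, one_mul, Finset.range_add, Finset.sum_union, ih, Finset.sum_map,
        succ_nsmul]
      · congr 1
        rw [← sum_range_cast m' H]
        refine Finset.sum_congr rfl fun k _ => ?_
        have : (((g * m' + k : ℕ)) : ZMod m') = ((k : ℕ) : ZMod m') := by
          push_cast
          simp [ZMod.natCast_self]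
        simp [addLeftEmbedding, this]
      · simp only [Finset.disjoint_left, mem_range, Finset.mem_map, addLeftEmbedding_apply]
        rintro a ha ⟨b, _, rfl⟩
        omega

lemma key_sum (m' n' g : ℕ) [NeZero m'] (hco : Nat.Coprime n' m')
    (F : ℤ → M) (hF : ∀ a b : ℤ, a % (m' : ℤ) = b % (m' : ℤ) → F a = F b) (z : ℤ) :
    ∑ k ∈ range (g * m'), F (n' * k) = g • ∑ j ∈ range m', F (z + j) := by
  set G : ZMod m' → M := fun c => F c.val with hG
  have hFG : ∀ a : ℤ, F a = G ((a : ZMod m')) := by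
    intro a
    refine hF a _ ?_
    rw [ZMod.val_intCast, Int.emod_emod_of_dvd _ dvd_rfl]
  have hmul : ∑ c : ZMod m', G ((n' : ZMod m') * c) = ∑ c : ZMod m', G c := by
    refine Finset.sum_bijective (fun c : ZMod m' => (n' : ZMod m') * c) ?_ ?_ ?_
    · refine IsUnit.isUnit_iff_mulLeft_bijective.1 ?_
      have := (ZMod.unitOfCoprime n' hco).isUnit
      rwa [ZMod.coe_unitOfCoprime] at this
    · intro c; simp
    · intro c _; rfl
  have hadd : ∑ c : ZMod m', G ((z : ZMod m') + c) = ∑ c : ZMod m', G c := by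
    refine Finset.sum_bijective (fun c : ZMod m' => (z : ZMod m') + c)
      (Equiv.addLeft (z : ZMod m')).bijective ?_ ?_
    · intro c; simp
    · intro c _; rfl
  calc ∑ k ∈ range (g * m'), F (n' * k)
      = ∑ k ∈ range (g * m'), G ((n' : ZMod m') * ((k : ℕ) : ZMod m')) := by
        refine Finset.sum_congr rfl fun k _ => ?_
        rw [hFG]; push_cast; ring_nf
    _ = g • ∑ c : ZMod m', G ((n' : ZMod m') * c) :=
        sum_range_mul_cast m' g (fun c => G ((n' : ZMod m') * c))
    _ = g • ∑ c : ZMod m', G c := by rw [hmul]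
    _ = g • ∑ j ∈ range m', F (z + j) := by
        congr 1
        rw [← hadd, ← sum_range_cast m' (fun c => G ((z : ZMod m') + c))]
        refine Finset.sum_congr rfl fun j _ => ?_
        rw [hFG]; push_cast; ring_nf




lemma qz_coe_add (a b : ℚ) : ((a + b : ℚ) : QZ) = (a : QZ) + (b : QZ) := rfl

lemma qz_coe_eq_coe {a b : ℚ} (z : ℤ) (h : a - b = z) : (a : QZ) = (b : QZ) := by
  have h0 : ((a - b : ℚ) : QZ) = 0 := by
    rw [AddCircle.coe_eq_zero_iff]
    exact ⟨z, by simp [h]⟩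
  have : (a : QZ) - (b : QZ) = 0 := by
    rw [← h0]; rfl
  exact sub_eq_zero.1 this

lemma qz_out_coe (r : QZ) : ((Quotient.out r : ℚ) : QZ) = r := Quotient.out_eq r

lemma qz_nsmul (n : ℕ) (a : ℚ) : n • ((a : ℚ) : QZ) = (((n : ℚ) * a : ℚ) : QZ) := by
  rw [← QuotientAddGroup.mk_nsmul]
  norm_num [nsmul_eq_mul]

lemma rhoZ_single (m : ℕ) (r : QZ) :
    rhoZ m (eQZ r) = ∑ k ∈ range m, eQZ (rdiv m r + (((k : ℚ) / (m : ℚ) : ℚ) : QZ)) := by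
  rw [rhoZ, LinearMap.comp_apply, LinearEquiv.coe_coe, AddMonoidAlgebra.coeffLinearEquiv_apply,
    eQZ, AddMonoidAlgebra.coeff_single, Finsupp.lift_apply, Finsupp.sum_single_index] <;>
    simp [eQZ]

lemma mapDomain_finset_sum' {ι : Type*} (f : QZ → QZ) (s : Finset ι) (v : ι → GR) :
    AddMonoidAlgebra.mapDomain f (∑ i ∈ s, v i) = ∑ i ∈ s, AddMonoidAlgebra.mapDomain f (v i) := by
  induction s using Finset.cons_induction with
  | empty => simp
  | cons a s ha ih => rw [Finset.sum_cons, Finset.sum_cons, AddMonoidAlgebra.mapDomain_add, ih]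

lemma core (n m : ℕ) (hn : 0 < n) (hm : 0 < m) (r : QZ) :
    sigmaZ n (rhoZ m (eQZ r)) =
      (Nat.gcd n m) • rhoZ (m / Nat.gcd n m) (sigmaZ (n / Nat.gcd n m) (eQZ r)) := by
  set g := Nat.gcd n m with hgdef
  set n' := n / g with hn'def
  set m' := m / g with hm'def
  have hg : 0 < g := Nat.gcd_pos_of_pos_left _ hn
  have hn_eq : g * n' = n := Nat.mul_div_cancel' (Nat.gcd_dvd_left n m)
  have hm_eq : g * m' = m := Nat.mul_div_cancel' (Nat.gcd_dvd_right n m)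
  have hm' : 0 < m' := Nat.div_pos (Nat.le_of_dvd hm (Nat.gcd_dvd_right n m)) hg
  haveI : NeZero m' := ⟨hm'.ne'⟩
  have hco : Nat.Coprime n' m' := Nat.coprime_div_gcd_div_gcd hg
  have hmQ : (m : ℚ) ≠ 0 := by exact_mod_cast hm.ne'
  have hm'Q : (m' : ℚ) ≠ 0 := by exact_mod_cast hm'.ne'
  have hnQ : (n : ℚ) = (g : ℚ) * (n' : ℚ) := by exact_mod_cast hn_eq.symm
  have hmQ2 : (m : ℚ) = (g : ℚ) * (m' : ℚ) := by exact_mod_cast hm_eq.symm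
  have hsig : ∀ (a : ℕ) (s : QZ), sigmaZ a (eQZ s) = eQZ (a • s) := by
    intro a s
    simp only [sigmaZ, eQZ, AddMonoidAlgebra.mapDomain_single]
  set q : ℚ := Quotient.out r with hq
  set p : ℚ := Quotient.out ((n' : ℕ) • r) with hp
  obtain ⟨z, hz⟩ : ∃ z : ℤ, p - (n' : ℚ) * q = (z : ℚ) := by
    have h1 : ((p : ℚ) : QZ) = (n' : ℕ) • r := qz_out_coe _
    have h2 : (((n' : ℚ) * q : ℚ) : QZ) = (n' : ℕ) • r := by
      rw [← qz_nsmul, hq, qz_out_coe]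
    have h3 : ((p - (n' : ℚ) * q : ℚ) : QZ) = 0 := by
      have h4 : ((p : ℚ) : QZ) - (((n' : ℚ) * q : ℚ) : QZ) = 0 := by
        rw [h1, h2, sub_self]
      rw [← h4]; rfl
    rw [AddCircle.coe_eq_zero_iff] at h3
    obtain ⟨z, hz⟩ := h3
    exact ⟨z, by simpa using hz.symm⟩
  set F : ℤ → GR := fun a => eQZ ((((n' : ℚ) * q + (a : ℚ)) / (m' : ℚ) : ℚ) : QZ) with hFdef
  have hFper : ∀ a b : ℤ, a % (m' : ℤ) = b % (m' : ℤ) → F a = F b := by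
    intro a b hab
    have hdvd : ((m' : ℕ) : ℤ) ∣ b - a := Int.ModEq.dvd hab
    obtain ⟨t, ht⟩ := hdvd
    have htQ : (b : ℚ) - (a : ℚ) = (m' : ℚ) * (t : ℚ) := by exact_mod_cast ht
    refine congrArg eQZ (qz_coe_eq_coe (-t) ?_)
    push_cast
    field_simp
    linarith
  have hLHS : sigmaZ n (rhoZ m (eQZ r)) = ∑ k ∈ range m, F ((n' : ℤ) * (k : ℤ)) := by
    rw [rhoZ_single, sigmaZ, mapDomain_finset_sum']
    refine Finset.sum_congr rfl fun k _ => ?_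
    have := hsig n (rdiv m r + (((k : ℚ) / (m : ℚ) : ℚ) : QZ))
    rw [sigmaZ] at this
    rw [this]
    refine congrArg eQZ ?_
    rw [rdiv, ← hq, ← qz_coe_add, qz_nsmul]
    refine qz_coe_eq_coe 0 ?_
    push_cast
    field_simp
    rw [hnQ, hmQ2]
    ring
  have hRHS : rhoZ m' (sigmaZ n' (eQZ r)) = ∑ j ∈ range m', F (z + (j : ℤ)) := by
    rw [hsig, rhoZ_single]
    refine Finset.sum_congr rfl fun j _ => ?_
    refine congrArg eQZ ?_
    rw [rdiv, ← hp, ← qz_coe_add]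
    refine qz_coe_eq_coe 0 ?_
    push_cast
    field_simp
    linarith
  calc sigmaZ n (rhoZ m (eQZ r)) = ∑ k ∈ range m, F ((n' : ℤ) * (k : ℤ)) := hLHS
    _ = ∑ k ∈ range (g * m'), F ((n' : ℤ) * (k : ℤ)) := by rw [hm_eq]
    _ = g • ∑ j ∈ range m', F (z + (j : ℤ)) := key_sum m' n' g hco F hFper z
    _ = g • rhoZ m' (sigmaZ n' (eQZ r)) := by rw [hRHS]

lemma mapDomain_smul' (f : QZ → QZ) (s : ℤ) (x : GR) :
    AddMonoidAlgebra.mapDomain f (s • x) = s • AddMonoidAlgebra.mapDomain f x := by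
  ext; simp [Finsupp.mapDomain_smul, -zsmul_eq_mul]

/-- σ_n(ρ̃_m(x)) = gcd(n,m) • ρ̃_{m'}(σ_{n'}(x)) with n'=n/gcd, m'=m/gcd. -/
theorem sigma_rho_gcd (n m : ℕ) (hn : 0 < n) (hm : 0 < m) :
    ∀ x : GR, sigmaZ n (rhoZ m x) =
      (Nat.gcd n m) • rhoZ (m / Nat.gcd n m) (sigmaZ (n / Nat.gcd n m) x) := by
  intro x
  induction x using AddMonoidAlgebra.induction_linear with
  | zero => simp [sigmaZ, AddMonoidAlgebra.mapDomain_zero]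
  | add f g hf hg =>
      simp only [sigmaZ] at hf hg ⊢
      rw [map_add, AddMonoidAlgebra.mapDomain_add, AddMonoidAlgebra.mapDomain_add, hf, hg, map_add, smul_add]
  | single a b =>
      have hb : (AddMonoidAlgebra.single a b : GR) = b • eQZ a := by
        simp [eQZ]
      have hc := core n m hn hm a
      simp only [sigmaZ] at hc ⊢
      rw [hb, map_smul, mapDomain_smul', mapDomain_smul', map_smul, hc, smul_comm]

end
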